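/- Fix integers d, n ≥ 1 and reals η > 0, μ_ψ ≥ 0. Let f_1,…,f_n : ℝ^d → ℝ be differentiable, let h_1,…,h_n : ℝ^d → ℝ be convex and differentiable, and let ψ : ℝ^d → ℝ be differentiable and μ_ψ-strongly convex. Set G := (1/n)·∑_{i=1}^n f_i + ψ, G_s := (1/n)·∑_{i=1}^n h_i + ψ, and H := G − G_s. Let ρ_1,…,ρ_n ∈ ℝ^d and x_1 ∈ ℝ^d be given, define x_{i+1} := x_i − η·(∇h_i(x_i) + ρ_i) for i ∈ {1,…,n}, and let x⁺ ∈ ℝ^d satisfy n·ψ(x⁺) + ‖x⁺ − x_{n+1}‖²/(2η) ≤ n·ψ(y) + ‖y − x_{n+1}‖²/(2η) for all y ∈ ℝ^d (i.e. x⁺ minimizes the proximal objective). Then for every z ∈ ℝ^d: G(x⁺) − G(z) ≤ H(x⁺) − H(z) + ‖z − x_1‖²/(2nη) − (1/(2nη) + μ_ψ/2)·‖z − x⁺‖² − ‖x⁺ − x_1‖²/(2nη) + (1/n)·∑_{i=1}^n ( B_{h_i}(x⁺, x_i) − B_{h_i}(z, x_i) ) + (1/n)·∑_{i=1}^n ⟨−ρ_i,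 x⁺ − z⟩. -/

import Mathlib

open scoped RealInnerProductSpace

/-- The Bregman divergence of a differentiable function `g`. -/
noncomputable def breg {d : ℕ} (g : EuclideanSpace ℝ (Fin d) → ℝ)
    (x y : EuclideanSpace ℝ (Fin d)) : ℝ :=
  g x - g y - ⟪gradient g y, x - y⟫

set_option maxHeartbeats 1000000
/-- The paper's deterministic one-epoch three-point inequality for one epoch of the
generalized shuffled gradient framework. Here `f_i` are the target components, `h_i`
the epoch's (possibly surrogate) components, `ρ_i` the injected noise vectors,
`x 0, x 1, …, x n` the within-epoch iterates (0-based), and `x⁺` the proximal point. -/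
theorem one_epoch_three_point {d n : ℕ} (hd : 1 ≤ d) (hn : 1 ≤ n)
    (η μψ : ℝ) (hη : 0 < η) (hμψ : 0 ≤ μψ)
    (f : Fin n → EuclideanSpace ℝ (Fin d) → ℝ)
    (hfdiff : ∀ i, Differentiable ℝ (f i))
    (h : Fin n → EuclideanSpace ℝ (Fin d) → ℝ)
    (hhconv : ∀ i, ConvexOn ℝ Set.univ (h i))
    (hhdiff : ∀ i, Differentiable ℝ (h i))
    (ψ : EuclideanSpace ℝ (Fin d) → ℝ)
    (hψdiff : Differentiable ℝ ψ)
    (hψsc : ∀ x y, ψ x + ⟪gradient ψ x, y - x⟫ + μψ / 2 * ‖y - x‖ ^ 2 ≤ ψ y)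
    (G Gs H : EuclideanSpace ℝ (Fin d) → ℝ)
    (hG : G = fun y => (1 / (n : ℝ)) * ∑ i, f i y + ψ y)
    (hGs : Gs = fun y => (1 / (n : ℝ)) * ∑ i, h i y + ψ y)
    (hH : H = fun y => G y - Gs y)
    (ρ : Fin n → EuclideanSpace ℝ (Fin d))
    (x : ℕ → EuclideanSpace ℝ (Fin d))
    (hxrec : ∀ i : Fin n,
      x ((i : ℕ) + 1) = x i - η • (gradient (h i) (x i) + ρ i))
    (xplus : EuclideanSpace ℝ (Fin d))
    (hprox : ∀ y, (n : ℝ) * ψ xplus + ‖xplus - x n‖ ^ 2 / (2 * η)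
      ≤ (n : ℝ) * ψ y + ‖y - x n‖ ^ 2 / (2 * η)) :
    ∀ z : EuclideanSpace ℝ (Fin d),
      G xplus - G z ≤ H xplus - H z
        + ‖z - x 0‖ ^ 2 / (2 * (n : ℝ) * η)
        - (1 / (2 * (n : ℝ) * η) + μψ / 2) * ‖z - xplus‖ ^ 2
        - ‖xplus - x 0‖ ^ 2 / (2 * (n : ℝ) * η)
        + (1 / (n : ℝ)) * ∑ i : Fin n, (breg (h i) xplus (x i) - breg (h i) z (x i))
        + (1 / (n : ℝ)) * ∑ i : Fin n, ⟪-ρ i, xplus - z⟫ := by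

  intro z
  have hn0 : (0:ℝ) < n := by exact_mod_cast hn
  have hη' : η ≠ 0 := ne_of_gt hη
  have hn' : (n:ℝ) ≠ 0 := ne_of_gt hn0
  -- prox inequality with denominators cleared
  have hprox2 : ∀ y, 2*η*((n:ℝ) * ψ xplus) + ‖xplus - x n‖^2
      ≤ 2*η*((n:ℝ) * ψ y) + ‖y - x n‖^2 := by
    intro y
    have h2 := mul_le_mul_of_nonneg_left (hprox y) (by positivity : (0:ℝ) ≤ 2*η)
    calc 2*η*((n:ℝ)*ψ xplus) + ‖xplus - x n‖^2
        = 2*η*((n:ℝ)*ψ xplus + ‖xplus - x n‖^2/(2*η)) := by field_simp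
      _ ≤ 2*η*((n:ℝ)*ψ y + ‖y - x n‖^2/(2*η)) := h2
      _ = 2*η*((n:ℝ)*ψ y) + ‖y - x n‖^2 := by field_simp
  have hQ0 : (0:ℝ) ≤ ‖z - xplus‖^2 := by positivity
  -- key one-sided inequality along segments
  have hAt : ∀ t : ℝ, 0 < t → t ≤ 1 →
      0 ≤ (2*η*(n:ℝ)*(ψ z - ψ xplus) - η*(n:ℝ)*μψ*‖z - xplus‖^2
            + 2*⟪xplus - x n, z - xplus⟫)
          + (η*(n:ℝ)*μψ*‖z - xplus‖^2 + ‖z - xplus‖^2)*t := by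
    intro t ht0 ht1
    have hz1 : z - (xplus + t • (z - xplus)) = (1-t) • (z - xplus) := by
      rw [sub_smul, one_smul]; abel
    have hz2 : xplus - (xplus + t • (z - xplus)) = (-t) • (z - xplus) := by
      rw [neg_smul]; abel
    have hz3 : (xplus + t • (z - xplus)) - x n = (xplus - x n) + t • (z - xplus) := by
      abel
    have sc1 := hψsc (xplus + t • (z - xplus)) z
    have sc2 := hψsc (xplus + t • (z - xplus)) xplus
    rw [hz1, real_inner_smul_right, norm_smul, Real.norm_eq_abs, mul_pow, sq_abs] at sc1
    rw [hz2, real_inner_smul_right, norm_smul, Real.norm_eq_abs, mul_pow, sq_abs] at sc2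
    have hpx := hprox2 (xplus + t • (z - xplus))
    rw [hz3, norm_add_sq_real, real_inner_smul_right, norm_smul, Real.norm_eq_abs,
      mul_pow, sq_abs] at hpx
    have c1 : (0:ℝ) ≤ 2*η*(n:ℝ)*t := by positivity
    have c2 : (0:ℝ) ≤ 2*η*(n:ℝ)*(1-t) :=
      mul_nonneg (by positivity) (by linarith)
    have h1 := mul_le_mul_of_nonneg_left sc1 c1
    have h2 := mul_le_mul_of_nonneg_left sc2 c2
    have hX : 0 ≤ t * ((2*η*(n:ℝ)*(ψ z - ψ xplus) - η*(n:ℝ)*μψ*‖z - xplus‖^2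
            + 2*⟪xplus - x n, z - xplus⟫)
          + (η*(n:ℝ)*μψ*‖z - xplus‖^2 + ‖z - xplus‖^2)*t) := by nlinarith [h1, h2, hpx]
    exact nonneg_of_mul_nonneg_right hX ht0
  -- strong-convexity/prox key inequality (t → 0)
  have hA' : 0 ≤ 2*η*(n:ℝ)*(ψ z - ψ xplus) - η*(n:ℝ)*μψ*‖z - xplus‖^2
      + 2*⟪xplus - x n, z - xplus⟫ := by
    by_contra hc
    push_neg at hc
    set A := 2*η*(n:ℝ)*(ψ z - ψ xplus) - η*(n:ℝ)*μψ*‖z - xplus‖^2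
      + 2*⟪xplus - x n, z - xplus⟫ with hA
    set B := η*(n:ℝ)*μψ*‖z - xplus‖^2 + ‖z - xplus‖^2 with hB
    have hB0 : 0 ≤ B := by
      rw [hB]; exact add_nonneg (mul_nonneg (mul_nonneg (by positivity) hμψ) hQ0) hQ0
    have ht0 : 0 < min 1 (-A / (B+1)) :=
      lt_min one_pos (div_pos (by linarith) (by linarith))
    have h3 := hAt _ ht0 (min_le_left _ _)
    have h4 : min 1 (-A / (B+1)) ≤ -A/(B+1) := min_le_right _ _
    have h5 : (B+1)*(min 1 (-A / (B+1))) ≤ -A := by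
      rw [mul_comm, ← le_div_iff₀ (by linarith : (0:ℝ) < B+1)]
      exact h4
    nlinarith [h3, h5, ht0]
  -- per-step gradient identity
  have hg : ∀ i : Fin n, ⟪gradient (h i) (x i), xplus - z⟫
      = (1/η) * ⟪x (i:ℕ) - x ((i:ℕ)+1), xplus - z⟫ - ⟪ρ i, xplus - z⟫ := by
    intro i
    have hd2 : x (i:ℕ) - x ((i:ℕ)+1)
        = η • (gradient (h i) (x (i:ℕ))) + η • ρ i := by
      rw [hxrec i, smul_add]; abel
    rw [hd2, inner_add_left, real_inner_smul_left, real_inner_smul_left]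
    field_simp
    ring
  -- telescoping
  have htel2 : ∑ i : Fin n, ⟪x (i:ℕ) - x ((i:ℕ)+1), xplus - z⟫
      = ⟪x 0 - x n, xplus - z⟫ := by
    rw [← sum_inner]
    congr 1
    rw [Fin.sum_univ_eq_sum_range (fun j => x j - x (j+1)) n]
    exact Finset.sum_range_sub' x n
  -- Bregman sum identity
  have hsum1 : ∑ i : Fin n, (breg (h i) xplus (x i) - breg (h i) z (x i))
      = ∑ i : Fin n, h i xplus - ∑ i : Fin n, h i z
        - (1/η) * ⟪x 0 - x n, xplus - z⟫ + ∑ i : Fin n, ⟪ρ i, xplus - z⟫ := by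
    have hterm : ∀ i : Fin n, breg (h i) xplus (x i) - breg (h i) z (x i)
        = h i xplus - h i z
          - ((1/η) * ⟪x (i:ℕ) - x ((i:ℕ)+1), xplus - z⟫ - ⟪ρ i, xplus - z⟫) := by
      intro i
      rw [← hg i]
      simp only [breg, inner_sub_right]
      ring
    rw [Finset.sum_congr rfl (fun i _ => hterm i)]
    rw [Finset.sum_sub_distrib, Finset.sum_sub_distrib, Finset.sum_sub_distrib,
      ← Finset.mul_sum, htel2]
    ring
  have hRsum : ∑ i : Fin n, ⟪-ρ i, xplus - z⟫
      = -∑ i : Fin n, ⟪ρ i, xplus - z⟫ := by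
    simp only [inner_neg_left]
    exact Finset.sum_neg_distrib _
  -- inner product identity
  have hN1 : ‖z - x 0‖^2
      = 2*(⟪x 0 - x n, xplus - z⟫ + ⟪xplus - x n, z - xplus⟫)
        + ‖z - xplus‖^2 + ‖xplus - x 0‖^2 := by
    rw [show z - x 0 = (z - xplus) + (xplus - x 0) from by abel, norm_add_sq_real]
    simp only [inner_sub_left, inner_sub_right]
    linear_combination -2*(real_inner_comm z xplus) + 2*(real_inner_comm z (x 0))
      - 2*(real_inner_comm xplus (x 0))
  have hfin : 0 ≤ 1/(2*(n:ℝ)*η) * (2*η*(n:ℝ)*(ψ z - ψ xplus)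
      - η*(n:ℝ)*μψ*‖z - xplus‖^2 + 2*⟪xplus - x n, z - xplus⟫) :=
    mul_nonneg (by positivity) hA'
  simp only [hH, hG, hGs]
  rw [← sub_nonneg]
  convert hfin using 1
  rw [hsum1, hRsum, hN1]
  field_simp
  ring
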